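/- For any m, n ∈ ℕ and any real l > 0, | Σ_{l/2 < d ≤ l, (d,mn)=1} 1/φ(d) − Σ_{l/2 < d ≤ l, (d,m)=1} 1/φ(d) | ≪ Σ_{p | n} 1/p, where the sums over d are over natural numbers, p runs over the prime divisors of n, and the implied constant is absolute. -/

import Mathlib

/-!
An integer counted by the second sum but not by the first shares a prime `p ∣ n`, so the
difference is at most `∑_{p ∣ n} ∑_{l/2 < pe ≤ l} 1/φ(pe)`, and `φ(pe) ≥ (p - 1) φ(e) ≥ p φ(e) / 2`.
It remains to bound the dyadic sums `∑_{x/2 < e ≤ x} 1/φ(e)` uniformly in `x`. Such a sum is at most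
`(2/x) ∑_{e ≤ x} e/φ(e)`, and `e/φ(e) ≤ ∑_{d ∣ e} 1/φ(d)` because `e = ∑_{d ∣ e} φ(d)` and
`φ(d) φ(e/d) ≤ φ(e)`. Swapping the sums gives `∑_{e ≤ x} e/φ(e) ≤ x ∑_d 1/(d φ(d))`, a convergent
series since `φ(d) ≥ √(d/2)`.
-/

open Finset
open scoped Nat

namespace Nat

theorem le_totient_sq_of_odd {n : ℕ} (hn : Odd n) : n ≤ φ n ^ 2 := by
  induction n using Nat.recOnPosPrimePosCoprime with
  | zero => simp
  | one => simp
  | prime_pow p k hp hk =>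
    obtain ⟨j, rfl⟩ := Nat.exists_eq_add_of_lt hk
    have hp3 : 3 ≤ p := by
      have := Nat.odd_iff.mp (hn.of_dvd_nat (dvd_pow_self p (by omega)))
      have := hp.two_le
      omega
    have hp_le : p ≤ (p - 1) ^ 2 := by
      obtain ⟨q, rfl⟩ := Nat.exists_eq_add_of_le hp3
      rw [show 3 + q - 1 = q + 2 by omega]; nlinarith
    rw [zero_add, totient_prime_pow_succ hp, pow_succ, mul_pow, ← pow_mul]
    exact Nat.mul_le_mul (Nat.pow_le_pow_right hp.pos (by omega)) hp_le
  | coprime a b _ _ hab iha ihb =>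
    obtain ⟨ha, hb⟩ := Nat.odd_mul.mp hn
    rw [totient_mul hab, mul_pow]
    exact Nat.mul_le_mul (iha ha) (ihb hb)

theorem le_two_mul_totient_sq (n : ℕ) : n ≤ 2 * φ n ^ 2 := by
  rcases eq_or_ne n 0 with rfl | hn
  · simp
  obtain ⟨k, m, hm, rfl⟩ := exists_eq_two_pow_mul_odd hn
  have hm_le := le_totient_sq_of_odd hm
  cases k with
  | zero => simp only [pow_zero, one_mul]; omega
  | succ j =>
    rw [totient_mul ((Nat.coprime_two_left.mpr hm).pow_left _), totient_prime_pow_succ prime_two]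
    calc 2 ^ (j + 1) * m ≤ 2 * (2 ^ j) ^ 2 * φ m ^ 2 := by
          refine Nat.mul_le_mul ?_ hm_le
          rw [pow_succ', ← pow_mul]
          exact Nat.mul_le_mul_left 2 (Nat.pow_le_pow_right two_pos (by omega))
      _ = 2 * (2 ^ j * (2 - 1) * φ m) ^ 2 := by ring

theorem summable_one_div_mul_totient :
    Summable fun d : ℕ => 1 / ((d : ℝ) * φ d) := by
  have h32 : Summable fun d : ℕ => 2 * ((d : ℝ) ^ (3 / 2 : ℝ))⁻¹ :=
    (Real.summable_nat_rpow_inv.mpr (by norm_num)).mul_left 2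
  refine h32.of_nonneg_of_le (fun d => by positivity) fun d => ?_
  rcases eq_or_ne d 0 with rfl | hd
  · simp
  have hsq : ((d : ℝ) ^ (3 / 2 : ℝ)) ^ 2 ≤ (2 * (d * φ d)) ^ 2 := by
    rw [← Real.rpow_natCast, ← Real.rpow_mul (by positivity)]
    have : (d : ℝ) ≤ 2 * φ d ^ 2 := by exact_mod_cast le_two_mul_totient_sq d
    norm_num
    nlinarith [sq_nonneg (d : ℝ)]
  have := (pow_le_pow_iff_left₀ (by positivity) (by positivity) two_ne_zero).mp hsq
  rw [← div_eq_mul_inv, div_le_div_iff₀ (by positivity) (by positivity)]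
  linarith

theorem div_totient_le_sum_divisors (e : ℕ) :
    (e : ℝ) / φ e ≤ ∑ d ∈ e.divisors, 1 / (φ d : ℝ) := by
  rcases eq_or_ne e 0 with rfl | he
  · simp
  have hφe : (0 : ℝ) < φ e := by exact_mod_cast totient_pos.mpr (pos_of_ne_zero he)
  have hterm : ∀ d ∈ e.divisors, (φ d : ℝ) / φ e ≤ 1 / φ (e / d) := by
    intro d hd
    have hφ : (0 : ℝ) < φ (e / d) := by
      exact_mod_cast totient_pos.mpr (Nat.div_pos (divisor_le hd) (pos_of_mem_divisors hd))
    rw [div_le_div_iff₀ hφe hφ, one_mul]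
    exact_mod_cast (totient_super_multiplicative d (e / d)).trans_eq
      (by rw [Nat.mul_div_cancel' (dvd_of_mem_divisors hd)])
  calc (e : ℝ) / φ e = ∑ d ∈ e.divisors, (φ d : ℝ) / φ e := by
        rw [← sum_div, ← Nat.cast_sum, sum_totient]
    _ ≤ ∑ d ∈ e.divisors, 1 / (φ (e / d) : ℝ) := sum_le_sum hterm
    _ = ∑ d ∈ e.divisors, 1 / (φ d : ℝ) := sum_div_divisors e fun d => 1 / (φ d : ℝ)

theorem sum_Ioc_sum_divisors_eq (N : ℕ) (f : ℕ → ℝ) (hf : f 0 = 0) :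
    ∑ e ∈ Ioc 0 N, ∑ d ∈ e.divisors, f d = ∑ d ∈ Ioc 0 N, f d * (N / d : ℕ) := by
  let F : ArithmeticFunction ℝ := ⟨f, hf⟩
  convert ArithmeticFunction.sum_Ioc_mul_zeta_eq_sum F N using 2
  exacts [(ArithmeticFunction.coe_mul_zeta_apply (f := F)).symm, rfl]

theorem sum_Ioc_div_totient_le (N : ℕ) :
    ∑ e ∈ Ioc 0 N, (e : ℝ) / φ e ≤ N * ∑' d : ℕ, 1 / ((d : ℝ) * φ d) := by
  calc ∑ e ∈ Ioc 0 N, (e : ℝ) / φ e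
      ≤ ∑ e ∈ Ioc 0 N, ∑ d ∈ e.divisors, 1 / (φ d : ℝ) :=
        sum_le_sum fun e _ => div_totient_le_sum_divisors e
    _ = ∑ d ∈ Ioc 0 N, 1 / (φ d : ℝ) * (N / d : ℕ) := sum_Ioc_sum_divisors_eq N _ (by simp)
    _ ≤ ∑ d ∈ Ioc 0 N, N * (1 / ((d : ℝ) * φ d)) := by
        refine sum_le_sum fun d _ => ?_
        calc 1 / (φ d : ℝ) * (N / d : ℕ) ≤ 1 / (φ d : ℝ) * (N / d) := by
              gcongr; exact Nat.cast_div_le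
          _ = N * (1 / ((d : ℝ) * φ d)) := by ring
    _ = N * ∑ d ∈ Ioc 0 N, 1 / ((d : ℝ) * φ d) := (mul_sum ..).symm
    _ ≤ N * ∑' d : ℕ, 1 / ((d : ℝ) * φ d) := by
        gcongr
        exact summable_one_div_mul_totient.sum_le_tsum _ fun d _ => by positivity

theorem one_div_totient_prime_mul_le {p : ℕ} (hp : p.Prime) (e : ℕ) :
    1 / (φ (p * e) : ℝ) ≤ 2 / p * (1 / φ e) := by
  rcases eq_or_ne e 0 with rfl | he
  · simp
  have hφe : (0 : ℝ) < φ e := by exact_mod_cast totient_pos.mpr (pos_of_ne_zero he)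
  have hp2 : (2 : ℝ) ≤ p := by exact_mod_cast hp.two_le
  have hφp : (p : ℝ) - 1 ≤ φ p := by
    rw [totient_prime hp, Nat.cast_sub hp.one_le, Nat.cast_one]
  have hsuper : (φ p : ℝ) * φ e ≤ φ (p * e) := by
    exact_mod_cast totient_super_multiplicative p e
  rw [mul_one_div, div_div, div_le_div_iff₀ (by nlinarith) (by positivity)]
  nlinarith

end Nat

noncomputable def dyadicBlock (x : ℝ) : Finset ℕ :=
  (Icc 1 ⌈x⌉₊).filter fun d => x / 2 < d ∧ (d : ℝ) ≤ x

theorem mem_dyadicBlock {x : ℝ} {d : ℕ} : d ∈ dyadicBlock x ↔ x / 2 < d ∧ (d : ℝ) ≤ x := by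
  simp only [dyadicBlock, mem_filter, mem_Icc, and_iff_right_iff_imp, and_imp]
  intro h₁ h₂
  exact ⟨by exact_mod_cast (show (0 : ℝ) < d by linarith),
    by exact_mod_cast h₂.trans (Nat.le_ceil x)⟩

theorem filter_Icc_ceil_eq_filter_dyadicBlock (x : ℝ) (P : ℕ → Prop) [DecidablePred P] :
    (Icc 1 ⌈x⌉₊).filter (fun d : ℕ => x / 2 < (d : ℝ) ∧ (d : ℝ) ≤ x ∧ P d) =
      (dyadicBlock x).filter P := by
  rw [dyadicBlock, filter_filter]
  simp only [and_assoc]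

theorem dyadicBlock_subset_Ioc_floor (x : ℝ) : dyadicBlock x ⊆ Ioc 0 ⌊x⌋₊ := by
  intro d hd
  obtain ⟨h₁, h₂⟩ := mem_dyadicBlock.mp hd
  exact mem_Ioc.mpr ⟨by exact_mod_cast (show (0 : ℝ) < d by linarith), Nat.le_floor h₂⟩

theorem sum_dyadicBlock_one_div_totient_le (x : ℝ) :
    ∑ e ∈ dyadicBlock x, 1 / (φ e : ℝ) ≤ 2 * ∑' d : ℕ, 1 / ((d : ℝ) * φ d) := by
  have hS : 0 ≤ ∑' d : ℕ, 1 / ((d : ℝ) * φ d) := tsum_nonneg fun d => by positivity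
  rcases le_or_gt x 0 with hx | hx
  · rw [show dyadicBlock x = ∅ from eq_empty_of_forall_notMem fun e he => by
      have := mem_dyadicBlock.mp he; have : (0 : ℝ) ≤ e := e.cast_nonneg; linarith]
    simpa using hS
  have hterm : ∀ e ∈ dyadicBlock x, 1 / (φ e : ℝ) ≤ 2 / x * (e / φ e) := by
    intro e he
    rw [← mul_div_assoc]
    refine div_le_div_of_nonneg_right ?_ (φ e).cast_nonneg
    rw [div_mul_eq_mul_div, le_div_iff₀ hx]
    linarith [(mem_dyadicBlock.mp he).1]
  calc ∑ e ∈ dyadicBlock x, 1 / (φ e : ℝ)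
      ≤ ∑ e ∈ dyadicBlock x, 2 / x * (e / φ e) := sum_le_sum hterm
    _ = 2 / x * ∑ e ∈ dyadicBlock x, (e : ℝ) / φ e := (mul_sum ..).symm
    _ ≤ 2 / x * ∑ e ∈ Ioc 0 ⌊x⌋₊, (e : ℝ) / φ e := by
        gcongr
        exact dyadicBlock_subset_Ioc_floor x
    _ ≤ 2 / x * (⌊x⌋₊ * ∑' d : ℕ, 1 / ((d : ℝ) * φ d)) := by
        gcongr; exact Nat.sum_Ioc_div_totient_le _
    _ ≤ 2 / x * (x * ∑' d : ℕ, 1 / ((d : ℝ) * φ d)) := by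
        gcongr; exact Nat.floor_le hx.le
    _ = 2 * ∑' d : ℕ, 1 / ((d : ℝ) * φ d) := by field_simp

theorem filter_dvd_dyadicBlock_subset_image {p : ℕ} (hp : p.Prime) (x : ℝ) :
    (dyadicBlock x).filter (p ∣ ·) ⊆ (dyadicBlock (x / p)).image (p * ·) := by
  intro d hd
  obtain ⟨hd, e, rfl⟩ := mem_filter.mp hd
  refine mem_image.mpr ⟨e, ?_, rfl⟩
  have hp0 : (0 : ℝ) < p := by exact_mod_cast hp.pos
  rw [mem_dyadicBlock] at hd ⊢
  push_cast at hd
  constructor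
  · rw [div_div, div_lt_iff₀ (by positivity)]; linarith
  · rw [le_div_iff₀ hp0]; linarith

theorem sum_filter_dvd_dyadicBlock_le {p : ℕ} (hp : p.Prime) (x : ℝ) :
    ∑ d ∈ (dyadicBlock x).filter (p ∣ ·), 1 / (φ d : ℝ) ≤
      4 * (∑' d : ℕ, 1 / ((d : ℝ) * φ d)) * (1 / p) := by
  calc ∑ d ∈ (dyadicBlock x).filter (p ∣ ·), 1 / (φ d : ℝ)
      ≤ ∑ d ∈ (dyadicBlock (x / p)).image (p * ·), 1 / (φ d : ℝ) :=
        sum_le_sum_of_subset_of_nonneg (filter_dvd_dyadicBlock_subset_image hp x)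
          fun _ _ _ => by positivity
    _ = ∑ e ∈ dyadicBlock (x / p), 1 / (φ (p * e) : ℝ) :=
        sum_image fun _ _ _ _ h => Nat.eq_of_mul_eq_mul_left hp.pos h
    _ ≤ ∑ e ∈ dyadicBlock (x / p), 2 / (p : ℝ) * (1 / φ e) :=
        sum_le_sum fun e _ => Nat.one_div_totient_prime_mul_le hp e
    _ = 2 / p * ∑ e ∈ dyadicBlock (x / p), 1 / (φ e : ℝ) := (mul_sum ..).symm
    _ ≤ 2 / p * (2 * ∑' d : ℕ, 1 / ((d : ℝ) * φ d)) := by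
        gcongr; exact sum_dyadicBlock_one_div_totient_le _
    _ = 4 * (∑' d : ℕ, 1 / ((d : ℝ) * φ d)) * (1 / p) := by ring

theorem sum_filter_not_coprime_le (s : Finset ℕ) {f : ℕ → ℝ} (hf : ∀ d, 0 ≤ f d) {n : ℕ}
    (hn : n ≠ 0) :
    ∑ d ∈ s.filter (¬ Nat.Coprime · n), f d ≤
      ∑ p ∈ n.primeFactors, ∑ d ∈ s.filter (p ∣ ·), f d := by
  calc ∑ d ∈ s.filter (¬ Nat.Coprime · n), f d
      ≤ ∑ d ∈ s, ∑ p ∈ n.primeFactors.filter (· ∣ d), f d := by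
        rw [sum_filter]
        refine sum_le_sum fun d _ => ?_
        split_ifs with hd
        · exact sum_nonneg fun _ _ => hf d
        · obtain ⟨p, hp, hpd, hpn⟩ := Nat.Prime.not_coprime_iff_dvd.mp hd
          exact single_le_sum (f := fun _ => f d) (fun _ _ => hf d)
            (mem_filter.mpr ⟨Nat.mem_primeFactors.mpr ⟨hp, hpn, hn⟩, hpd⟩)
    _ = ∑ p ∈ n.primeFactors, ∑ d ∈ s.filter (p ∣ ·), f d :=
        sum_comm' fun d p => by simp only [mem_filter]; tauto

theorem statement_4 :
    ∃ C : ℝ, 0 < C ∧ ∀ (m n : ℕ) (l : ℝ), 1 ≤ m → 1 ≤ n → 0 < l →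
      |(∑ d ∈ (Finset.Icc 1 ⌈l⌉₊).filter
            (fun d : ℕ => l / 2 < (d : ℝ) ∧ (d : ℝ) ≤ l ∧ Nat.Coprime d (m * n)),
          1 / (Nat.totient d : ℝ)) -
        (∑ d ∈ (Finset.Icc 1 ⌈l⌉₊).filter
            (fun d : ℕ => l / 2 < (d : ℝ) ∧ (d : ℝ) ≤ l ∧ Nat.Coprime d m),
          1 / (Nat.totient d : ℝ))|
        ≤ C * ∑ p ∈ n.primeFactors, 1 / (p : ℝ) := by
  have hS : 0 < ∑' d : ℕ, 1 / ((d : ℝ) * φ d) :=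
    Nat.summable_one_div_mul_totient.tsum_pos (fun _ => by positivity) 1 (by norm_num)
  refine ⟨4 * ∑' d : ℕ, 1 / ((d : ℝ) * φ d), by positivity, fun m n l _ hn _ => ?_⟩
  rw [filter_Icc_ceil_eq_filter_dyadicBlock, filter_Icc_ceil_eq_filter_dyadicBlock]
  set A := (dyadicBlock l).filter (Nat.Coprime · m)
  have hsplit : (dyadicBlock l).filter (Nat.Coprime · (m * n)) = A.filter (Nat.Coprime · n) := by
    ext d
    simp only [A, mem_filter, Nat.coprime_mul_iff_right, and_assoc]
  rw [hsplit, ← sum_filter_add_sum_filter_not A (Nat.Coprime · n), sub_add_cancel_left, abs_neg,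
    abs_of_nonneg (sum_nonneg fun _ _ => by positivity)]
  calc ∑ d ∈ A.filter (¬ Nat.Coprime · n), 1 / (φ d : ℝ)
      ≤ ∑ p ∈ n.primeFactors, ∑ d ∈ A.filter (p ∣ ·), 1 / (φ d : ℝ) :=
        sum_filter_not_coprime_le A (fun _ => by positivity) (by omega)
    _ ≤ ∑ p ∈ n.primeFactors, ∑ d ∈ (dyadicBlock l).filter (p ∣ ·), 1 / (φ d : ℝ) := by
        gcongr
        exact filter_subset _ _
    _ ≤ ∑ p ∈ n.primeFactors, 4 * (∑' d : ℕ, 1 / ((d : ℝ) * φ d)) * (1 / p) :=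
        sum_le_sum fun p hp => sum_filter_dvd_dyadicBlock_le (Nat.prime_of_mem_primeFactors hp) l
    _ = _ := (mul_sum ..).symm
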